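/- Fix an N×N real symmetric matrix Q, c_1,…,c_m > 0, and m-tuples of symmetric matrices A = (A_1,…,A_m), B = (B_1,…,B_m) with 0 < A_i ≤ B_i for all i. Then the infimum I_{A,B} = inf_{f ∈ F_{A,B}} BL(f) is attained: there exists f ∈ F_{A,B} with BL(f) = I_{A,B}. -/

import Mathlib

open MeasureTheory Matrix Filter

/-- The (un-normalized) centered Gaussian `g_A(x) = exp(-(1/2)⟨Ax,x⟩)`. -/
noncomputable def gaussFn {ι : Type*} [Fintype ι] (A : Matrix ι ι ℝ) (x : ι → ℝ) : ℝ :=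
  Real.exp (-(1/2 : ℝ) * (x ⬝ᵥ A.mulVec x))

/-- A nonnegative function is log-concave if
`f(tx + (1-t)y) ≥ f(x)^t f(y)^(1-t)` for all `x, y` and `t ∈ [0,1]`. -/
def IsLogConcave {ι : Type*} (f : (ι → ℝ) → ℝ) : Prop :=
  (∀ x, 0 ≤ f x) ∧ ∀ x y : ι → ℝ, ∀ t : ℝ, 0 ≤ t → t ≤ 1 →
    f x ^ t * f y ^ (1 - t) ≤ f (t • x + (1 - t) • y)

/-- A nonnegative function is log-convex if
`f(tx + (1-t)y) ≤ f(x)^t f(y)^(1-t)` for all `x, y` and `t ∈ [0,1]`. -/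
def IsLogConvex {ι : Type*} (f : (ι → ℝ) → ℝ) : Prop :=
  (∀ x, 0 ≤ f x) ∧ ∀ x y : ι → ℝ, ∀ t : ℝ, 0 ≤ t → t ≤ 1 →
    f (t • x + (1 - t) • y) ≤ f x ^ t * f y ^ (1 - t)

/-- `f` is more log-concave than `g_A` if `f = g_A ⬝ h` with `h` log-concave. -/
def MoreLogConcaveThan {ι : Type*} [Fintype ι] (A : Matrix ι ι ℝ) (f : (ι → ℝ) → ℝ) : Prop :=
  ∃ h : (ι → ℝ) → ℝ, IsLogConcave h ∧ f = fun x => gaussFn A x * h x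

/-- `f` is more log-convex than `g_A` if `f = g_A ⬝ h` with `h` log-convex. -/
def MoreLogConvexThan {ι : Type*} [Fintype ι] (A : Matrix ι ι ℝ) (f : (ι → ℝ) → ℝ) : Prop :=
  ∃ h : (ι → ℝ) → ℝ, IsLogConvex h ∧ f = fun x => gaussFn A x * h x

/-- The Brascamp–Lieb functional
`BL(f) = (∫ e^{-(1/2)⟨Qx,x⟩} ∏ f_i(x_i)^{c_i} dx) / ∏ (∫ f_i)^{c_i}`. -/
noncomputable def BL {m : ℕ} {n : Fin m → ℕ}
    (Q : Matrix ((i : Fin m) × Fin (n i)) ((i : Fin m) × Fin (n i)) ℝ)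
    (c : Fin m → ℝ) (f : ∀ i, (Fin (n i) → ℝ) → ℝ) : ℝ :=
  (∫ x : ((i : Fin m) × Fin (n i)) → ℝ,
      Real.exp (-(1/2 : ℝ) * (x ⬝ᵥ Q.mulVec x)) * ∏ i, f i (fun j => x ⟨i, j⟩) ^ c i) /
    ∏ i, (∫ y : Fin (n i) → ℝ, f i y) ^ c i

/-- `f ∈ F_A`: each `f_i ∈ L¹(ℝ^{n_i}, ℝ₊)` is even, non-zero, and more log-concave
than `g_{A_i}`. -/
def memFA {m : ℕ} {n : Fin m → ℕ} (A : ∀ i, Matrix (Fin (n i)) (Fin (n i)) ℝ)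
    (f : ∀ i, (Fin (n i) → ℝ) → ℝ) : Prop :=
  ∀ i, Integrable (f i) ∧ (∀ x, 0 ≤ f i x) ∧ (∀ x, f i (-x) = f i x) ∧
    (0 < ∫ x : Fin (n i) → ℝ, f i x) ∧ MoreLogConcaveThan (A i) (f i)

/-- `f ∈ F_{A,B}`: each `f_i ∈ L¹(ℝ^{n_i}, ℝ₊)` is even, non-zero, more log-concave
than `g_{A_i}` and more log-convex than `g_{B_i}`. -/
def memFAB {m : ℕ} {n : Fin m → ℕ} (A B : ∀ i, Matrix (Fin (n i)) (Fin (n i)) ℝ)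
    (f : ∀ i, (Fin (n i) → ℝ) → ℝ) : Prop :=
  memFA A f ∧ ∀ i, MoreLogConvexThan (B i) (f i)


/-! Write each `f_i ∈ F_{A,B}` as `f_i(0) · exp φ_i`; `BL` does not see the constants. Evenness
together with midpoint concavity of `φ_i + q_{A_i}` and convexity of `φ_i + q_{B_i}` squeezes
`-q_{B_i} ≤ φ_i ≤ -q_{A_i}`, so the convex functions `φ_i + q_{B_i}` are locally uniformly bounded
and hence locally equi-Lipschitz. Along a minimizing sequence, Tychonoff on a countable dense set
and equicontinuity give a pointwise convergent subsequence; its limit is again admissible, since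
all the defining conditions are closed, and dominated convergence, with the Gaussians
`g_{A_i}` as dominating functions, carries `BL` to the limit. -/

open Real Set Topology

section QuadForm

variable {ι : Type*} [Fintype ι]

noncomputable def quadForm (M : Matrix ι ι ℝ) (x : ι → ℝ) : ℝ := 1 / 2 * (x ⬝ᵥ M *ᵥ x)

lemma gaussFn_eq_exp_neg_quadForm (M : Matrix ι ι ℝ) :
    gaussFn M = fun x => exp (-quadForm M x) := by
  ext x
  simp only [gaussFn, quadForm, neg_mul]

@[simp] lemma quadForm_zero_right (M : Matrix ι ι ℝ) : quadForm M 0 = 0 := by simp [quadForm]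

lemma quadForm_smul (M : Matrix ι ι ℝ) (t : ℝ) (x : ι → ℝ) :
    quadForm M (t • x) = t ^ 2 * quadForm M x := by
  simp only [quadForm, mulVec_smul, dotProduct_smul, smul_dotProduct, smul_eq_mul]
  ring

@[simp] lemma quadForm_neg (M : Matrix ι ι ℝ) (x : ι → ℝ) : quadForm M (-x) = quadForm M x := by
  simpa using quadForm_smul M (-1) x

lemma quadForm_sub_left (M N : Matrix ι ι ℝ) (x : ι → ℝ) :
    quadForm (M - N) x = quadForm M x - quadForm N x := by
  simp only [quadForm, sub_mulVec, dotProduct_sub]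
  ring

@[fun_prop] lemma continuous_quadForm (M : Matrix ι ι ℝ) : Continuous (quadForm M) := by
  unfold quadForm dotProduct mulVec
  fun_prop

lemma Matrix.PosSemidef.quadForm_nonneg {M : Matrix ι ι ℝ} (hM : M.PosSemidef) (x : ι → ℝ) :
    0 ≤ quadForm M x := by
  have := hM.dotProduct_mulVec_nonneg x
  simp only [star_trivial] at this
  unfold quadForm
  positivity

lemma Matrix.PosSemidef.convexOn_quadForm {M : Matrix ι ι ℝ} (hM : M.PosSemidef) :
    ConvexOn ℝ univ (quadForm M) := by
  refine ⟨convex_univ, fun x _ y _ a b ha hb hab => ?_⟩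
  have hsymm : y ⬝ᵥ M *ᵥ x = x ⬝ᵥ M *ᵥ y := by
    conv_lhs => rw [← (isHermitian_iff_isSymm.1 hM.isHermitian).eq]
    exact dotProduct_transpose_mulVec M y x
  have hxy := hM.quadForm_nonneg (x - y)
  obtain rfl : b = 1 - a := by linarith
  simp only [quadForm, smul_eq_mul, mulVec_add, mulVec_sub, mulVec_smul, dotProduct_add,
    dotProduct_sub, add_dotProduct, sub_dotProduct, dotProduct_smul, smul_dotProduct, hsymm]
    at hxy ⊢
  nlinarith [mul_nonneg ha hb, mul_nonneg (mul_nonneg ha hb) hxy]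

lemma Matrix.PosDef.exists_pos_mul_dotProduct_self_le {M : Matrix ι ι ℝ} (hM : M.PosDef) :
    ∃ ε > 0, ∀ x, ε * (x ⬝ᵥ x) ≤ x ⬝ᵥ M *ᵥ x := by
  classical
  rcases isEmpty_or_nonempty ι with _ | _
  · exact ⟨1, one_pos, fun x => by simp [dotProduct]⟩
  open scoped MatrixOrder in
  obtain ⟨ε, hε, hle⟩ : ∃ ε > 0, algebraMap ℝ (Matrix ι ι ℝ) ε ≤ M :=
    (CFC.exists_pos_algebraMap_le_iff hM.isHermitian.isSelfAdjoint).2 fun x hx =>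
      (isStrictlyPositive_iff_posDef.2 hM).spectrum_pos hx
  refine ⟨ε, hε, fun x => ?_⟩
  have := (Matrix.le_iff.1 hle).dotProduct_mulVec_nonneg x
  simp only [star_trivial, Algebra.algebraMap_eq_smul_one, sub_mulVec, smul_mulVec, one_mulVec,
    dotProduct_sub, dotProduct_smul, smul_eq_mul] at this
  linarith

lemma Matrix.PosDef.integrable_exp_neg_quadForm {M : Matrix ι ι ℝ} (hM : M.PosDef) :
    Integrable fun x => exp (-quadForm M x) := by
  obtain ⟨ε, hε, hle⟩ := hM.exists_pos_mul_dotProduct_self_le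
  have hprod : Integrable fun x : ι → ℝ => ∏ j, exp (-(ε / 2) * x j ^ 2) :=
    Integrable.fintype_prod (f := fun _ t => exp (-(ε / 2) * t ^ 2))
      fun _ => integrable_exp_neg_mul_sq (by positivity)
  refine hprod.mono' (by fun_prop) (Eventually.of_forall fun x => ?_)
  rw [norm_of_nonneg (exp_pos _).le, ← exp_sum, exp_le_exp, ← Finset.mul_sum]
  have := hle x
  simp only [quadForm, dotProduct, ← sq] at this ⊢
  linarith

end QuadForm

section LogConcave

variable {E : Type*} [AddCommGroup E] [Module ℝ E]

lemma ConcaveOn.le_apply_zero_of_even {f : E → ℝ} (hf : ConcaveOn ℝ univ f)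
    (heven : ∀ x, f (-x) = f x) (x : E) : f x ≤ f 0 := by
  have := hf.2 (mem_univ x) (mem_univ (-x)) (by norm_num : (0 : ℝ) ≤ 1 / 2)
    (by norm_num : (0 : ℝ) ≤ 1 / 2) (by norm_num)
  rw [smul_neg, add_neg_cancel, heven, smul_eq_mul] at this
  linarith

lemma ConvexOn.apply_zero_le_of_even {f : E → ℝ} (hf : ConvexOn ℝ univ f)
    (heven : ∀ x, f (-x) = f x) (x : E) : f 0 ≤ f x :=
  neg_le_neg_iff.1 (hf.neg.le_apply_zero_of_even (fun x => by simp [heven]) x)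

variable {ι : Type*} {h : (ι → ℝ) → ℝ}

lemma IsLogConcave.le_apply_zero (hh : IsLogConcave h) (heven : ∀ x, h (-x) = h x)
    (x : ι → ℝ) : h x ≤ h 0 := by
  have := hh.2 x (-x) (1 / 2) (by norm_num) (by norm_num)
  rw [heven, ← rpow_add' (hh.1 x) (by norm_num)] at this
  norm_num at this
  exact this

lemma IsLogConvex.apply_zero_le (hh : IsLogConvex h) (heven : ∀ x, h (-x) = h x)
    (x : ι → ℝ) : h 0 ≤ h x := by
  have := hh.2 x (-x) (1 / 2) (by norm_num) (by norm_num)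
  rw [heven, ← rpow_add' (hh.1 x) (by norm_num)] at this
  norm_num at this
  exact this

lemma IsLogConcave.concaveOn_log (hh : IsLogConcave h) (hpos : ∀ x, 0 < h x) :
    ConcaveOn ℝ univ fun x => log (h x) := by
  refine ⟨convex_univ, fun x _ y _ a b ha hb hab => ?_⟩
  obtain rfl : b = 1 - a := by linarith
  have hx := rpow_pos_of_pos (hpos x) a
  have hy := rpow_pos_of_pos (hpos y) (1 - a)
  have := log_le_log (mul_pos hx hy) (hh.2 x y a ha (by linarith))
  rwa [log_mul hx.ne' hy.ne', log_rpow (hpos x), log_rpow (hpos y)] at this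

lemma IsLogConvex.convexOn_log (hh : IsLogConvex h) (hpos : ∀ x, 0 < h x) :
    ConvexOn ℝ univ fun x => log (h x) := by
  refine ⟨convex_univ, fun x _ y _ a b ha hb hab => ?_⟩
  obtain rfl : b = 1 - a := by linarith
  have hx := rpow_pos_of_pos (hpos x) a
  have hy := rpow_pos_of_pos (hpos y) (1 - a)
  have := log_le_log (hpos _) (hh.2 x y a ha (by linarith))
  rwa [log_mul hx.ne' hy.ne', log_rpow (hpos x), log_rpow (hpos y)] at this

lemma isLogConcave_exp {φ : (ι → ℝ) → ℝ} (hφ : ConcaveOn ℝ univ φ) :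
    IsLogConcave fun x => exp (φ x) := by
  refine ⟨fun x => (exp_pos _).le, fun x y t ht ht1 => ?_⟩
  rw [← exp_mul, ← exp_mul, ← exp_add, exp_le_exp, mul_comm, mul_comm (φ y)]
  exact hφ.2 (mem_univ x) (mem_univ y) ht (by linarith) (by ring)

lemma isLogConvex_exp {φ : (ι → ℝ) → ℝ} (hφ : ConvexOn ℝ univ φ) :
    IsLogConvex fun x => exp (φ x) := by
  refine ⟨fun x => (exp_pos _).le, fun x y t ht ht1 => ?_⟩
  rw [← exp_mul, ← exp_mul, ← exp_add, exp_le_exp, mul_comm, mul_comm (φ y)]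
  exact hφ.2 (mem_univ x) (mem_univ y) ht (by linarith) (by ring)

end LogConcave

section MoreLogConcave

variable {ι : Type*} [Fintype ι] {A : Matrix ι ι ℝ} {f : (ι → ℝ) → ℝ}

lemma gaussFn_pos (A : Matrix ι ι ℝ) (x : ι → ℝ) : 0 < gaussFn A x := exp_pos _

@[simp] lemma gaussFn_zero_right (A : Matrix ι ι ℝ) : gaussFn A 0 = 1 := by
  simp [gaussFn_eq_exp_neg_quadForm]

@[simp] lemma gaussFn_neg (A : Matrix ι ι ℝ) (x : ι → ℝ) : gaussFn A (-x) = gaussFn A x := by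
  simp [gaussFn_eq_exp_neg_quadForm]

lemma MoreLogConcaveThan.le_gaussFn_mul (hf : MoreLogConcaveThan A f)
    (heven : ∀ x, f (-x) = f x) (x : ι → ℝ) : f x ≤ gaussFn A x * f 0 := by
  obtain ⟨h, hh, rfl⟩ := hf
  have hheven y : h (-y) = h y := by
    have : gaussFn A (-y) * h (-y) = gaussFn A y * h y := heven y
    rwa [gaussFn_neg, mul_right_inj' (gaussFn_pos A y).ne'] at this
  simpa using mul_le_mul_of_nonneg_left (hh.le_apply_zero hheven x) (gaussFn_pos A x).le

lemma MoreLogConvexThan.gaussFn_mul_le (hf : MoreLogConvexThan A f)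
    (heven : ∀ x, f (-x) = f x) (x : ι → ℝ) : gaussFn A x * f 0 ≤ f x := by
  obtain ⟨h, hh, rfl⟩ := hf
  have hheven y : h (-y) = h y := by
    have : gaussFn A (-y) * h (-y) = gaussFn A y * h y := heven y
    rwa [gaussFn_neg, mul_right_inj' (gaussFn_pos A y).ne'] at this
  simpa using mul_le_mul_of_nonneg_left (hh.apply_zero_le hheven x) (gaussFn_pos A x).le

lemma MoreLogConcaveThan.concaveOn_log_add (hf : MoreLogConcaveThan A f)
    (hpos : ∀ x, 0 < f x) : ConcaveOn ℝ univ fun x => log (f x) + quadForm A x := by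
  obtain ⟨h, hh, rfl⟩ := hf
  have hhpos x : 0 < h x := (mul_pos_iff_of_pos_left (gaussFn_pos A x)).1 (hpos x)
  convert hh.concaveOn_log hhpos using 2 with x
  rw [log_mul (gaussFn_pos A x).ne' (hhpos x).ne', gaussFn_eq_exp_neg_quadForm, log_exp]
  ring

lemma MoreLogConvexThan.convexOn_log_add (hf : MoreLogConvexThan A f)
    (hpos : ∀ x, 0 < f x) : ConvexOn ℝ univ fun x => log (f x) + quadForm A x := by
  obtain ⟨h, hh, rfl⟩ := hf
  have hhpos x : 0 < h x := (mul_pos_iff_of_pos_left (gaussFn_pos A x)).1 (hpos x)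
  convert hh.convexOn_log hhpos using 2 with x
  rw [log_mul (gaussFn_pos A x).ne' (hhpos x).ne', gaussFn_eq_exp_neg_quadForm, log_exp]
  ring

end MoreLogConcave

section LogProfile

variable {ι : Type*} [Fintype ι] {A B : Matrix ι ι ℝ} {φ : (ι → ℝ) → ℝ}

/-- `φ = log (f / f 0)` for a member `f` of `F_{A,B}`; note `quadForm A x = ⟨Ax, x⟩ / 2`. -/
structure IsLogProfile (A B : Matrix ι ι ℝ) (φ : (ι → ℝ) → ℝ) : Prop where
  map_zero : φ 0 = 0
  even : ∀ x, φ (-x) = φ x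
  concaveOn_add : ConcaveOn ℝ univ fun x => φ x + quadForm A x
  convexOn_add : ConvexOn ℝ univ fun x => φ x + quadForm B x

namespace IsLogProfile

lemma le_neg_quadForm (hφ : IsLogProfile A B φ) (x : ι → ℝ) : φ x ≤ -quadForm A x := by
  have := hφ.concaveOn_add.le_apply_zero_of_even (fun x => by simp [hφ.even]) x
  simp only [hφ.map_zero, quadForm_zero_right, add_zero] at this
  linarith

lemma neg_quadForm_le (hφ : IsLogProfile A B φ) (x : ι → ℝ) : -quadForm B x ≤ φ x := by
  have := hφ.convexOn_add.apply_zero_le_of_even (fun x => by simp [hφ.even]) x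
  simp only [hφ.map_zero, quadForm_zero_right, add_zero] at this
  linarith

lemma abs_add_quadForm_le (hφ : IsLogProfile A B φ) (x : ι → ℝ) :
    |φ x + quadForm B x| ≤ quadForm (B - A) x := by
  rw [quadForm_sub_left, abs_le]
  constructor <;> linarith [hφ.le_neg_quadForm x, hφ.neg_quadForm_le x]

protected lemma continuous (hφ : IsLogProfile A B φ) : Continuous φ := by
  have : Continuous fun x => φ x + quadForm B x - quadForm B x :=
    (continuousOn_univ.1 (hφ.convexOn_add.continuousOn isOpen_univ)).sub (continuous_quadForm B)
  simpa using this

lemma of_tendsto {Φ : ℕ → (ι → ℝ) → ℝ} (hΦ : ∀ k, IsLogProfile A B (Φ k))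
    (hlim : Tendsto Φ atTop (𝓝 φ)) : IsLogProfile A B φ where
  map_zero := tendsto_nhds_unique (tendsto_pi_nhds.1 hlim 0)
    (by simpa only [(hΦ _).map_zero] using tendsto_const_nhds)
  even x := tendsto_nhds_unique (tendsto_pi_nhds.1 hlim (-x))
    (by simpa only [(hΦ _).even] using tendsto_pi_nhds.1 hlim x)
  concaveOn_add := isClosed_setOfPred_concaveOn.mem_of_tendsto (hlim.add_const (quadForm A))
    (Eventually.of_forall fun k => (hΦ k).concaveOn_add)
  convexOn_add := isClosed_setOfPred_convexOn.mem_of_tendsto (hlim.add_const (quadForm B))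
    (Eventually.of_forall fun k => (hΦ k).convexOn_add)

lemma integrable_exp (hφ : IsLogProfile A B φ) (hA : A.PosDef) :
    Integrable fun x => exp (φ x) :=
  hA.integrable_exp_neg_quadForm.mono' (continuous_exp.comp hφ.continuous).aestronglyMeasurable
    (Eventually.of_forall fun x => by
      rw [norm_of_nonneg (exp_pos _).le]
      exact exp_le_exp.2 (hφ.le_neg_quadForm x))

lemma moreLogConcaveThan_exp (hφ : IsLogProfile A B φ) :
    MoreLogConcaveThan A fun x => exp (φ x) :=
  ⟨_, isLogConcave_exp hφ.concaveOn_add, by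
    ext x
    rw [gaussFn_eq_exp_neg_quadForm, ← exp_add, neg_add_cancel_comm_assoc]⟩

lemma moreLogConvexThan_exp (hφ : IsLogProfile A B φ) :
    MoreLogConvexThan B fun x => exp (φ x) :=
  ⟨_, isLogConvex_exp hφ.convexOn_add, by
    ext x
    rw [gaussFn_eq_exp_neg_quadForm, ← exp_add, neg_add_cancel_comm_assoc]⟩

end IsLogProfile

lemma isLogProfile_neg_quadForm (hAB : (B - A).PosSemidef) :
    IsLogProfile A B fun x => -quadForm A x where
  map_zero := by simp
  even x := by simp
  concaveOn_add := by simpa using concaveOn_const (0 : ℝ) convex_univ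
  convexOn_add := by
    convert hAB.convexOn_quadForm using 1
    ext x
    rw [quadForm_sub_left, neg_add_eq_sub]

theorem exists_isLogProfile {f : (ι → ℝ) → ℝ} (hnonneg : ∀ x, 0 ≤ f x)
    (heven : ∀ x, f (-x) = f x) (hint : 0 < ∫ x, f x) (hA : MoreLogConcaveThan A f)
    (hB : MoreLogConvexThan B f) :
    0 < f 0 ∧ ∃ φ, IsLogProfile A B φ ∧ f = fun x => f 0 * exp (φ x) := by
  have hf0 : 0 < f 0 := by
    refine (hnonneg 0).lt_of_ne' fun h0 => hint.ne' ?_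
    have : f = 0 := funext fun x =>
      le_antisymm (by simpa [h0] using hA.le_gaussFn_mul heven x) (hnonneg x)
    simp [this]
  have hpos x : 0 < f x := (mul_pos (gaussFn_pos B x) hf0).trans_le (hB.gaussFn_mul_le heven x)
  refine ⟨hf0, fun x => log (f x) - log (f 0), ⟨by simp, fun x => by simp [heven], ?_, ?_⟩, ?_⟩
  · exact ((hA.concaveOn_log_add hpos).add_const (-log (f 0))).congr fun x _ => by
      simp only [Pi.add_apply]
      ring
  · exact ((hB.convexOn_log_add hpos).add_const (-log (f 0))).congr fun x _ => by
      simp only [Pi.add_apply]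
      ring
  · ext x
    rw [exp_sub, exp_log (hpos x), exp_log hf0]
    field_simp

end LogProfile

section Compactness

lemma equicontinuous_of_convexOn_of_abs_le {E κ : Type*} [NormedAddCommGroup E]
    [NormedSpace ℝ E] {F : κ → E → ℝ} {g : E → ℝ} (hF : ∀ k, ConvexOn ℝ univ (F k))
    (hg : Continuous g) (hFg : ∀ k x, |F k x| ≤ g x) : Equicontinuous F := by
  intro x₀
  obtain ⟨r, hr, hgr⟩ : ∃ r > 0, ∀ y, dist y x₀ < r → g y ≤ g x₀ + 1 := by
    obtain ⟨r, hr, h⟩ := Metric.continuousAt_iff.1 hg.continuousAt 1 one_pos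
    exact ⟨r, hr, fun y hy => by linarith [(abs_lt.1 (h hy)).2]⟩
  have hlip k : LipschitzOnWith _ (F k) (Metric.ball x₀ (r - r / 2)) :=
    ((hF k).subset (subset_univ _) (convex_ball x₀ r)).lipschitzOnWith_of_abs_le (half_pos hr)
      fun y hy => (hFg k y).trans (hgr y hy)
  have := (LipschitzOnWith.uniformEquicontinuousOn F _ hlip).equicontinuousOn x₀
    (Metric.mem_ball_self (by linarith))
  rwa [EquicontinuousWithinAt, nhdsWithin_eq_nhds.2 (Metric.ball_mem_nhds x₀ (by linarith))]
    at this

lemma EquicontinuousAt.cauchySeq_of_mem_closure {X α : Type*} [TopologicalSpace X]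
    [PseudoMetricSpace α] {F : ℕ → X → α} {s : Set X} {x : X} (hF : EquicontinuousAt F x)
    (hx : x ∈ closure s) (hs : ∀ y ∈ s, CauchySeq fun k => F k y) :
    CauchySeq fun k => F k x := by
  rw [Metric.cauchySeq_iff']
  intro ε hε
  obtain ⟨y, hxy, hys⟩ := ((Metric.equicontinuousAt_iff_right.1 hF (ε / 3) (by positivity))
    |>.and_frequently (mem_closure_iff_frequently.1 hx)).exists
  obtain ⟨N, hN⟩ := Metric.cauchySeq_iff'.1 (hs y hys) (ε / 3) (by positivity)
  refine ⟨N, fun k hk => ?_⟩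
  calc dist (F k x) (F N x)
      ≤ dist (F k x) (F k y) + dist (F k y) (F N y) + dist (F N y) (F N x) :=
        dist_triangle4 _ _ _ _
    _ < ε / 3 + ε / 3 + ε / 3 := by
        gcongr
        exacts [hxy k, hN k hk, dist_comm (F N x) _ ▸ hxy N]
    _ = ε := by ring

theorem exists_tendsto_subseq_of_equicontinuous {κ : Type*} [Finite κ] {X : κ → Type*}
    [∀ a, TopologicalSpace (X a)] [∀ a, TopologicalSpace.SeparableSpace (X a)]
    [∀ a, Nonempty (X a)] {F : ℕ → ∀ a, X a → ℝ} (hF : ∀ a, Equicontinuous fun k => F k a)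
    {C : ∀ a, X a → ℝ} (hFC : ∀ k a x, |F k a x| ≤ C a x) :
    ∃ Φ, ∃ σ : ℕ → ℕ, StrictMono σ ∧ Tendsto (F ∘ σ) atTop (𝓝 Φ) := by
  choose d hd using fun a => TopologicalSpace.exists_dense_seq (X a)
  obtain ⟨_, -, σ, hσ, hlim⟩ := (isCompact_univ_pi fun a => isCompact_univ_pi fun j =>
      isCompact_Icc (a := -C a (d a j)) (b := C a (d a j))).tendsto_subseq
    (x := fun k a j => F k a (d a j)) fun k a _ j _ => abs_le.1 (hFC k a (d a j))
  have hcauchy a x : CauchySeq fun k => F (σ k) a x := by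
    refine ((hF a).comp σ x).cauchySeq_of_mem_closure (s := range (d a))
      (by rw [(hd a).closure_range]; exact mem_univ x) ?_
    rintro _ ⟨j, rfl⟩
    exact (tendsto_pi_nhds.1 (tendsto_pi_nhds.1 hlim a) j).cauchySeq
  choose Φ hΦ using fun a x => cauchySeq_tendsto_of_complete (hcauchy a x)
  exact ⟨Φ, σ, hσ, tendsto_pi_nhds.2 fun a => tendsto_pi_nhds.2 (hΦ a)⟩

theorem exists_isMinOn_of_tendsto_subseq {α : Type*} {s : Set α} {J : α → ℝ}
    (hs : s.Nonempty) (hJ : BddBelow (J '' s))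
    (hcompact : ∀ u : ℕ → α, (∀ k, u k ∈ s) →
      ∃ a ∈ s, ∃ σ : ℕ → ℕ, StrictMono σ ∧ Tendsto (J ∘ u ∘ σ) atTop (𝓝 (J a))) :
    ∃ a ∈ s, IsMinOn J s a := by
  obtain ⟨v, -, hv, hvs⟩ := exists_seq_tendsto_sInf (hs.image J) hJ
  choose u hus huv using hvs
  obtain ⟨a, has, σ, hσ, hJa⟩ := hcompact u hus
  have hJa' : J a = sInf (J '' s) := tendsto_nhds_unique hJa <| by
    simpa only [Function.comp_def, huv] using hv.comp hσ.tendsto_atTop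
  exact ⟨a, has, isMinOn_iff.2 fun b hb => hJa' ▸ csInf_le hJ (mem_image_of_mem J hb)⟩

end Compactness

section BrascampLieb

variable {m : ℕ} {n : Fin m → ℕ}
  (Q : Matrix ((i : Fin m) × Fin (n i)) ((i : Fin m) × Fin (n i)) ℝ) (c : Fin m → ℝ)

noncomputable def blIntegrand (f : ∀ i, (Fin (n i) → ℝ) → ℝ)
    (x : ((i : Fin m) × Fin (n i)) → ℝ) : ℝ :=
  exp (-(1 / 2 : ℝ) * (x ⬝ᵥ Q *ᵥ x)) * ∏ i, f i (fun j => x ⟨i, j⟩) ^ c i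

lemma BL_eq_div (f : ∀ i, (Fin (n i) → ℝ) → ℝ) :
    BL Q c f = (∫ x, blIntegrand Q c f x) / ∏ i, (∫ y, f i y) ^ c i := rfl

lemma BL_nonneg {f : ∀ i, (Fin (n i) → ℝ) → ℝ} (hf : ∀ i x, 0 ≤ f i x) : 0 ≤ BL Q c f :=
  div_nonneg (integral_nonneg fun _ => mul_nonneg (exp_pos _).le
      (Finset.prod_nonneg fun i _ => rpow_nonneg (hf i _) _))
    (Finset.prod_nonneg fun i _ => rpow_nonneg (integral_nonneg (hf i)) _)

lemma BL_const_mul {f : ∀ i, (Fin (n i) → ℝ) → ℝ} (hf : ∀ i x, 0 ≤ f i x) {C : Fin m → ℝ}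
    (hC : ∀ i, 0 < C i) : BL Q c (fun i x => C i * f i x) = BL Q c f := by
  have hnum : ∫ x, blIntegrand Q c (fun i x => C i * f i x) x
      = (∏ i, C i ^ c i) * ∫ x, blIntegrand Q c f x := by
    rw [← integral_const_mul]
    congr 1 with x
    simp only [blIntegrand, mul_rpow (hC _).le (hf _ _), Finset.prod_mul_distrib]
    ring
  have hden : ∏ i, (∫ y, C i * f i y) ^ c i
      = (∏ i, C i ^ c i) * ∏ i, (∫ y, f i y) ^ c i := by
    simp only [integral_const_mul, mul_rpow (hC _).le (integral_nonneg (hf _)),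
      Finset.prod_mul_distrib]
  rw [BL_eq_div, BL_eq_div, hnum, hden,
    mul_div_mul_left _ _ (Finset.prod_pos fun i _ => rpow_pos_of_pos (hC i) _).ne']

variable {Q c}

theorem tendsto_BL {f : ℕ → ∀ i, (Fin (n i) → ℝ) → ℝ} {f' g : ∀ i, (Fin (n i) → ℝ) → ℝ}
    (hc : ∀ i, 0 ≤ c i) (hmeas : ∀ k i, Measurable (f k i)) (hnonneg : ∀ k i x, 0 ≤ f k i x)
    (hle : ∀ k i x, f k i x ≤ g i x) (hg : ∀ i, Integrable (g i))
    (hgQ : Integrable (blIntegrand Q c g)) (hlim : Tendsto f atTop (𝓝 f'))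
    (hpos : ∀ i, 0 < ∫ y, f' i y) :
    Tendsto (fun k => BL Q c (f k)) atTop (𝓝 (BL Q c f')) := by
  have hpt i y : Tendsto (fun k => f k i y) atTop (𝓝 (f' i y)) :=
    tendsto_pi_nhds.1 (tendsto_pi_nhds.1 hlim i) y
  have hnum : Tendsto (fun k => ∫ x, blIntegrand Q c (f k) x) atTop
      (𝓝 (∫ x, blIntegrand Q c f' x)) := by
    refine tendsto_integral_of_dominated_convergence _ (fun k => ?_) hgQ
      (fun k => Eventually.of_forall fun x => ?_) (Eventually.of_forall fun x => ?_)
    · refine (Measurable.mul (by fun_prop) (Finset.measurable_prod _ fun i _ => ?_))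
        |>.aestronglyMeasurable
      exact ((hmeas k i).comp (measurable_pi_lambda _ fun j => measurable_pi_apply _)).pow_const _
    · unfold blIntegrand
      rw [norm_of_nonneg (mul_nonneg (exp_pos _).le
        (Finset.prod_nonneg fun i _ => rpow_nonneg (hnonneg k i _) _))]
      exact mul_le_mul_of_nonneg_left
        (Finset.prod_le_prod (fun i _ => rpow_nonneg (hnonneg k i _) _)
          fun i _ => rpow_le_rpow (hnonneg k i _) (hle k i _) (hc i)) (exp_pos _).le
    · exact tendsto_const_nhds.mul
        (tendsto_finsetProd _ fun i _ => (hpt i _).rpow_const (Or.inr (hc i)))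
  have hden : Tendsto (fun k => ∏ i, (∫ y, f k i y) ^ c i) atTop
      (𝓝 (∏ i, (∫ y, f' i y) ^ c i)) :=
    tendsto_finsetProd _ fun i _ => (tendsto_integral_of_dominated_convergence (g i)
      (fun k => (hmeas k i).aestronglyMeasurable) (hg i)
      (fun k => Eventually.of_forall fun y => (norm_of_nonneg (hnonneg k i y)).trans_le (hle k i y))
      (Eventually.of_forall (hpt i))).rpow_const (Or.inr (hc i))
  exact hnum.div hden (Finset.prod_pos fun i _ => rpow_pos_of_pos (hpos i) _).ne'

end BrascampLieb

section Minimizer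

variable {m : ℕ} {n : Fin m → ℕ} {A B : ∀ i, Matrix (Fin (n i)) (Fin (n i)) ℝ}

lemma memFAB_exp {Φ : ∀ i, (Fin (n i) → ℝ) → ℝ} (hA : ∀ i, (A i).PosDef)
    (hΦ : ∀ i, IsLogProfile (A i) (B i) (Φ i)) : memFAB A B fun i x => exp (Φ i x) :=
  ⟨fun i => ⟨(hΦ i).integrable_exp (hA i), fun _ => (exp_pos _).le,
      fun x => congrArg exp ((hΦ i).even x), integral_exp_pos ((hΦ i).integrable_exp (hA i)),
      (hΦ i).moreLogConcaveThan_exp⟩,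
    fun i => (hΦ i).moreLogConvexThan_exp⟩

lemma exists_isLogProfile_BL_eq (Q : Matrix ((i : Fin m) × Fin (n i)) ((i : Fin m) × Fin (n i)) ℝ)
    (c : Fin m → ℝ) {g : ∀ i, (Fin (n i) → ℝ) → ℝ} (hg : memFAB A B g) :
    ∃ Φ : ∀ i, (Fin (n i) → ℝ) → ℝ,
      (∀ i, IsLogProfile (A i) (B i) (Φ i)) ∧ BL Q c g = BL Q c fun i x => exp (Φ i x) := by
  choose hg0 Φ hΦ hgΦ using fun i => exists_isLogProfile (hg.1 i).2.1 (hg.1 i).2.2.1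
    (hg.1 i).2.2.2.1 (hg.1 i).2.2.2.2 (hg.2 i)
  refine ⟨Φ, hΦ, ?_⟩
  rw [show g = fun i x => g i 0 * exp (Φ i x) from funext hgΦ]
  exact BL_const_mul Q c (fun _ _ => (exp_pos _).le) hg0

theorem exists_tendsto_subseq_of_isLogProfile {κ : Type*} [Finite κ] {ι : κ → Type*}
    [∀ a, Fintype (ι a)] {A B : ∀ a, Matrix (ι a) (ι a) ℝ} {Φ : ℕ → ∀ a, (ι a → ℝ) → ℝ}
    (hΦ : ∀ k a, IsLogProfile (A a) (B a) (Φ k a)) :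
    ∃ Ψ, (∀ a, IsLogProfile (A a) (B a) (Ψ a)) ∧
      ∃ σ : ℕ → ℕ, StrictMono σ ∧ Tendsto (Φ ∘ σ) atTop (𝓝 Ψ) := by
  let qB : ∀ a, (ι a → ℝ) → ℝ := fun a => quadForm (B a)
  obtain ⟨Ψ, σ, hσ, hlim⟩ := exists_tendsto_subseq_of_equicontinuous (F := fun k => Φ k + qB)
    (fun a => equicontinuous_of_convexOn_of_abs_le (fun k => (hΦ k a).convexOn_add)
      (continuous_quadForm (B a - A a)) fun k => (hΦ k a).abs_add_quadForm_le)
    fun k a => (hΦ k a).abs_add_quadForm_le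
  have hlim' : Tendsto (Φ ∘ σ) atTop (𝓝 (Ψ - qB)) := by
    simpa [Function.comp_def] using hlim.sub_const qB
  exact ⟨Ψ - qB, fun a => IsLogProfile.of_tendsto (fun k => hΦ (σ k) a)
    (tendsto_pi_nhds.1 hlim' a), σ, hσ, hlim'⟩

theorem exists_isMinOn_BL_exp
    (Q : Matrix ((i : Fin m) × Fin (n i)) ((i : Fin m) × Fin (n i)) ℝ) {c : Fin m → ℝ}
    (hc : ∀ i, 0 ≤ c i) (hA : ∀ i, (A i).PosDef) (hAB : ∀ i, (B i - A i).PosSemidef) :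
    ∃ Φ ∈ {Φ : ∀ i, (Fin (n i) → ℝ) → ℝ | ∀ i, IsLogProfile (A i) (B i) (Φ i)},
      IsMinOn (fun Φ => BL Q c fun i x => exp (Φ i x))
        {Φ | ∀ i, IsLogProfile (A i) (B i) (Φ i)} Φ := by
  have hgauss i : IsLogProfile (A i) (B i) fun x => -quadForm (A i) x :=
    isLogProfile_neg_quadForm (hAB i)
  have hBL_nonneg (Φ : ∀ i, (Fin (n i) → ℝ) → ℝ) : 0 ≤ BL Q c fun i x => exp (Φ i x) :=
    BL_nonneg Q c fun _ _ => (exp_pos _).le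
  -- Without integrability, Bochner's junk value `∫ = 0` makes the Gaussians attain `BL = 0`.
  by_cases hI : Integrable (blIntegrand Q c fun i x => exp (-quadForm (A i) x))
  · refine exists_isMinOn_of_tendsto_subseq ?_ ?_ fun Φ hΦ => ?_
    · exact ⟨_, hgauss⟩
    · exact ⟨0, by rintro _ ⟨Φ, -, rfl⟩; exact hBL_nonneg Φ⟩
    obtain ⟨Ψ, hΨ, σ, hσ, hlim⟩ := exists_tendsto_subseq_of_isLogProfile hΦ
    have hexp : Continuous fun Φ : ∀ i, (Fin (n i) → ℝ) → ℝ => fun i x => exp (Φ i x) := by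
      fun_prop
    refine ⟨Ψ, hΨ, σ, hσ, tendsto_BL (f := fun k i x => exp (Φ (σ k) i x)) hc
      (fun k i => (hΦ (σ k) i).continuous.rexp.measurable) (fun _ _ _ => (exp_pos _).le)
      (fun k i x => exp_le_exp.2 ((hΦ (σ k) i).le_neg_quadForm x))
      (fun i => (hA i).integrable_exp_neg_quadForm) hI ((hexp.tendsto Ψ).comp hlim)
      fun i => integral_exp_pos ((hΨ i).integrable_exp (hA i))⟩
  · refine ⟨_, hgauss, isMinOn_iff.2 fun Φ _ => ?_⟩
    rw [BL_eq_div, integral_undef hI, zero_div]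
    exact hBL_nonneg Φ

end Minimizer

theorem inf_BL_attained_general
    (m : ℕ) (n : Fin m → ℕ)
    (Q : Matrix ((i : Fin m) × Fin (n i)) ((i : Fin m) × Fin (n i)) ℝ)
    (c : Fin m → ℝ) (hc : ∀ i, 0 < c i)
    (A B : ∀ i, Matrix (Fin (n i)) (Fin (n i)) ℝ)
    (hA : ∀ i, (A i).PosDef)
    (hAB : ∀ i, (B i - A i).PosSemidef) :
    ∃ f, memFAB A B f ∧ BL Q c f = sInf {r : ℝ | ∃ g, memFAB A B g ∧ r = BL Q c g} := by
  obtain ⟨Φ, hΦ, hmin⟩ := exists_isMinOn_BL_exp Q (fun i => (hc i).le) hA hAB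
  have hmem := memFAB_exp hA hΦ
  have hleast : IsLeast {r : ℝ | ∃ g, memFAB A B g ∧ r = BL Q c g}
      (BL Q c fun i x => exp (Φ i x)) := by
    refine ⟨⟨_, hmem, rfl⟩, ?_⟩
    rintro _ ⟨g, hg, rfl⟩
    obtain ⟨Ψ, hΨ, hgΨ⟩ := exists_isLogProfile_BL_eq Q c hg
    exact hgΨ ▸ hmin hΨ
  exact ⟨_, hmem, hleast.csInf_eq.symm⟩

/-- Step 1 of the Nakamura–Tsuji scheme: for `0 < A_i ≤ B_i`, the infimum
`I_{A,B} = inf_{f ∈ F_{A,B}} BL(f)` is attained by some `f ∈ F_{A,B}`. -/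
theorem inf_BL_attained
    (m : ℕ) (n : Fin m → ℕ)
    (Q : Matrix ((i : Fin m) × Fin (n i)) ((i : Fin m) × Fin (n i)) ℝ) (hQ : Q.IsSymm)
    (c : Fin m → ℝ) (hc : ∀ i, 0 < c i)
    (A B : ∀ i, Matrix (Fin (n i)) (Fin (n i)) ℝ)
    (hA : ∀ i, (A i).PosDef) (hBsymm : ∀ i, (B i).IsSymm)
    (hAB : ∀ i, (B i - A i).PosSemidef) :
    ∃ f, memFAB A B f ∧ BL Q c f = sInf {r : ℝ | ∃ g, memFAB A B g ∧ r = BL Q c g} :=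
  inf_BL_attained_general m n Q c hc A B hA hAB
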